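/- Let l be a positive integer, ∅ ≠ A ⊆ {0,1}^l, and S an infinite sequence whose consecutive length-l blocks all lie in A (so S ∈ A^∞). Then dim_FS^{({0,1})}(S) = (log|A| / l) · dim_FS^{(A)}(S), where the left-hand side is the finite-state dimension of S as a binary sequence and the right-hand side views each length-l block as a single character of the alphabet A. -/

import Mathlib

open Filter

/-- The prefix of length `n` of the infinite sequence `S`. -/
def pre {α : Type*} (S : ℕ → α) (n : ℕ) : List α := List.ofFn fun i : Fin n => S i

/-- A finite-state gambler over the alphabet `A`: finitely many states, a
transition function, and a rational betting function giving a probability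
measure on `A` at each state. -/
structure FSG (A : Type) [Fintype A] where
  Q : Type
  fin : Finite Q
  q0 : Q
  δ : Q → A → Q
  β : Q → A → ℚ
  β_nonneg : ∀ q a, 0 ≤ β q a
  β_sum : ∀ q, ∑ a : A, β q a = 1

variable {A : Type} [Fintype A]

/-- The state reached after reading the string `w`. -/
def FSG.run (G : FSG A) (w : List A) : G.Q := w.foldl G.δ G.q0

/-- The martingale of the finite-state gambler `G`:
`d_G(λ) = 1` and `d_G(wa) = d_G(w) · β(δ(w))(a) · |A|`. -/
def FSG.mart (G : FSG A) (w : List A) : ℝ :=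
  ∏ i : Fin w.length, ((G.β (G.run (w.take i)) (w.get i) : ℝ) * (Fintype.card A : ℝ))

/-- The `s`-gale of `G`: `d_G^(s)(w) = |A|^((s-1)|w|) · d_G(w)`. -/
noncomputable def FSG.sgale (G : FSG A) (s : ℝ) (w : List A) : ℝ :=
  (Fintype.card A : ℝ) ^ ((s - 1) * (w.length : ℝ)) * G.mart w

/-- `G` `s`-succeeds on `S`: the `s`-gale is unbounded along prefixes of `S`
(equivalently, its limsup is `∞`). -/
def FSG.succeeds (G : FSG A) (s : ℝ) (S : ℕ → A) : Prop :=
  ∀ c : ℝ, ∃ n : ℕ, c < G.sgale s (pre S n)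

/-- The finite-state dimension of `S` over the alphabet `A`. -/
noncomputable def dimFS (S : ℕ → A) : ℝ :=
  sInf {s : ℝ | 0 ≤ s ∧ ∃ G : FSG A, G.succeeds s S}

/-!
A binary gambler `G` induces a gambler on blocks with the same states, betting on a block at least
the probability that `G` gives to its letters; conversely a block gambler induces a binary gambler
that remembers the unfinished block and bets, letter by letter, the conditional probabilities of
its bet on blocks. In both directions the martingales after `k` blocks compare up to the factor
`(|A| / 2 ^ l) ^ k`, so an `s`-gale over bits and a `t`-gale over blocks compare exactly when
`|A| ^ t = 2 ^ (s l)`, i.e. `s = (log₂ |A| / l) t`. Inside a block the binary `s`-gale grows at most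
by `2 ^ (s l)`, so success over bits is already witnessed at block boundaries. When `|A| = 1` the
binary gambler induced by the uniform block gambler wins at every rate `s > 0`.
-/

theorem pre_zero {α : Type*} (S : ℕ → α) : pre S 0 = [] := rfl

theorem length_pre {α : Type*} (S : ℕ → α) (n : ℕ) : (pre S n).length = n :=
  List.length_ofFn

theorem pre_succ {α : Type*} (S : ℕ → α) (n : ℕ) : pre S (n + 1) = pre S n ++ [S n] := by
  simp only [pre, List.ofFn_succ', List.concat_eq_append]
  rfl

theorem pre_add {α : Type*} (S : ℕ → α) (m n : ℕ) :
    pre S (m + n) = pre S m ++ List.ofFn fun i : Fin n => S (m + i) := by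
  simp [pre, List.ofFn_add]

theorem List.append_singleton_prefix_iff {α : Type*} {u x : List α} (b : α)
    (h : u.length < x.length) : u ++ [b] <+: x ↔ u <+: x ∧ x[u.length] = b := by
  rw [List.prefix_iff_eq_take, List.prefix_iff_eq_take, List.length_append, List.length_singleton,
    List.take_add_one, List.getElem?_eq_getElem h, Option.toList_some]
  constructor
  · intro h'
    obtain ⟨h1, h2⟩ := List.append_inj' h' rfl
    exact ⟨h1, by simpa using h2.symm⟩
  · rintro ⟨h1, rfl⟩
    rw [← h1]

theorem ite_prefix_eq_sum_ite_append_singleton_prefix {α M : Type*} [Fintype α] [DecidableEq α]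
    [AddCommMonoid M] {u x : List α} (h : u.length < x.length) (c : M) :
    (if u <+: x then c else 0) = ∑ b : α, if u ++ [b] <+: x then c else 0 := by
  simp only [List.append_singleton_prefix_iff _ h]
  by_cases hp : u <+: x <;> simp [hp]

namespace FSG

variable (G : FSG A)

def prob : G.Q → List A → ℚ
  | _, [] => 1
  | q, a :: w => G.β q a * prob (G.δ q a) w

theorem run_append (w v : List A) : G.run (w ++ v) = v.foldl G.δ (G.run w) :=
  List.foldl_append

theorem run_append_singleton (w : List A) (a : A) : G.run (w ++ [a]) = G.δ (G.run w) a := by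
  simp [run_append]

theorem β_le_one (q : G.Q) (a : A) : G.β q a ≤ 1 :=
  G.β_sum q ▸ Finset.single_le_sum (fun b _ => G.β_nonneg q b) (Finset.mem_univ a)

theorem prob_nonneg (q : G.Q) (w : List A) : 0 ≤ G.prob q w := by
  induction w generalizing q with
  | nil => exact zero_le_one
  | cons a w ih => exact mul_nonneg (G.β_nonneg q a) (ih _)

theorem prob_le_one (q : G.Q) (w : List A) : G.prob q w ≤ 1 := by
  induction w generalizing q with
  | nil => exact le_rfl
  | cons a w ih => exact mul_le_one₀ (G.β_le_one q a) (G.prob_nonneg _ w) (ih _)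

theorem sum_prob_ofFn (q : G.Q) (n : ℕ) : ∑ v : Fin n → A, G.prob q (List.ofFn v) = 1 := by
  induction n generalizing q with
  | zero => simp [prob]
  | succ n ih =>
    rw [← (Fin.consEquiv fun _ => A).sum_comp, Fintype.sum_prod_type]
    simp [Fin.consEquiv, List.ofFn_succ, prob, ← Finset.mul_sum, ih, G.β_sum]

theorem mart_nil : G.mart [] = 1 := by
  simp [mart]

theorem mart_append_singleton (w : List A) (a : A) :
    G.mart (w ++ [a]) = G.mart w * (G.β (G.run w) a * Fintype.card A) := by
  have h : w.length + 1 = (w ++ [a]).length := by simp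
  rw [mart, ← Fin.prod_congr' _ h, Fin.prod_univ_castSucc, mart]
  congr 1
  · refine Finset.prod_congr rfl fun i _ => ?_
    simp [List.take_append_of_le_length i.isLt.le, List.getElem_append_left]
  · simp

theorem mart_append (w v : List A) :
    G.mart (w ++ v) = G.mart w * (G.prob (G.run w) v * Fintype.card A ^ v.length) := by
  induction v generalizing w with
  | nil => simp [prob]
  | cons a v ih =>
    rw [← List.singleton_append, ← List.append_assoc, ih, mart_append_singleton,
      run_append_singleton]
    simp only [List.singleton_append, prob, List.length_cons]
    push_cast
    ring

theorem mart_nonneg (w : List A) : 0 ≤ G.mart w :=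
  Finset.prod_nonneg fun _ _ => mul_nonneg (by exact_mod_cast G.β_nonneg _ _) (Nat.cast_nonneg _)

theorem mart_append_le (w v : List A) :
    G.mart (w ++ v) ≤ G.mart w * Fintype.card A ^ v.length := by
  have hprob : (G.prob (G.run w) v : ℝ) ≤ 1 := by exact_mod_cast G.prob_le_one _ v
  rw [mart_append]
  exact mul_le_mul_of_nonneg_left (mul_le_of_le_one_left (by positivity) hprob) (G.mart_nonneg w)

theorem sgale_nonneg (s : ℝ) (w : List A) : 0 ≤ G.sgale s w :=
  mul_nonneg (Real.rpow_nonneg (Nat.cast_nonneg _) _) (G.mart_nonneg w)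

theorem sgale_eq_rpow_mul_mart_div [Nonempty A] (s : ℝ) (w : List A) :
    G.sgale s w
      = (Fintype.card A : ℝ) ^ (s * w.length) * (G.mart w / Fintype.card A ^ w.length) := by
  have hA : (0 : ℝ) < Fintype.card A := by exact_mod_cast Fintype.card_pos
  rw [sgale, sub_mul, one_mul, Real.rpow_sub hA, Real.rpow_natCast, div_mul_eq_mul_div,
    mul_div_assoc]

theorem sgale_append_le [Nonempty A] (s : ℝ) (w v : List A) :
    G.sgale s (w ++ v) ≤ (Fintype.card A : ℝ) ^ (s * v.length) * G.sgale s w := by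
  have hA : (0 : ℝ) < Fintype.card A := by exact_mod_cast Fintype.card_pos
  calc G.sgale s (w ++ v)
      ≤ (Fintype.card A : ℝ) ^ ((s - 1) * (w ++ v).length)
          * (G.mart w * Fintype.card A ^ v.length) :=
        mul_le_mul_of_nonneg_left (G.mart_append_le w v) (by positivity)
    _ = (Fintype.card A : ℝ) ^ (s * v.length) * G.sgale s w := by
        have hexp : (s - 1) * (w.length + v.length : ℝ)
            = s * v.length + (s - 1) * w.length - v.length := by ring
        rw [sgale, ← Real.rpow_natCast _ v.length, List.length_append, Nat.cast_add, hexp,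
          Real.rpow_sub hA, Real.rpow_add hA]
        field_simp

theorem exists_lt_sgale_pre_mul {s : ℝ} {S : ℕ → A} (hG : G.succeeds s S) (hs : 0 ≤ s)
    {l : ℕ} (hl : 0 < l) (C : ℝ) : ∃ k, C < G.sgale s (pre S (k * l)) := by
  have : Nonempty A := ⟨S 0⟩
  have hA : (1 : ℝ) ≤ Fintype.card A := by exact_mod_cast Fintype.card_pos
  obtain ⟨n, hn⟩ := hG ((Fintype.card A : ℝ) ^ (s * l) * C)
  refine ⟨n / l, lt_of_mul_lt_mul_left (a := (Fintype.card A : ℝ) ^ (s * l)) ?_ (by positivity)⟩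
  have hmod : ((n % l : ℕ) : ℝ) ≤ l := by exact_mod_cast (Nat.mod_lt n hl).le
  calc (Fintype.card A : ℝ) ^ (s * l) * C < G.sgale s (pre S n) := hn
    _ = G.sgale s (pre S (n / l * l) ++ List.ofFn fun i : Fin (n % l) => S (n / l * l + i)) := by
        rw [← pre_add, Nat.div_add_mod']
    _ ≤ (Fintype.card A : ℝ) ^ (s * (n % l : ℕ)) * G.sgale s (pre S (n / l * l)) := by
        simpa only [List.length_ofFn] using G.sgale_append_le s (pre S (n / l * l))
          (List.ofFn fun i : Fin (n % l) => S (n / l * l + i))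
    _ ≤ (Fintype.card A : ℝ) ^ (s * l) * G.sgale s (pre S (n / l * l)) :=
        mul_le_mul_of_nonneg_right (Real.rpow_le_rpow_of_exponent_le hA
          (mul_le_mul_of_nonneg_left hmod hs)) (G.sgale_nonneg s _)

theorem mul_sgale_le_mul_sgale_of_mart_le {B : Type} [Fintype B] [Nonempty A] [Nonempty B]
    (H : FSG B) {w : List A} {v : List B} {s t : ℝ}
    (hmart : G.mart w * Fintype.card B ^ v.length ≤ H.mart v * Fintype.card A ^ w.length) :
    (Fintype.card B : ℝ) ^ (t * v.length) * G.sgale s w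
      ≤ (Fintype.card A : ℝ) ^ (s * w.length) * H.sgale t v := by
  have hA : (0 : ℝ) < Fintype.card A := by exact_mod_cast Fintype.card_pos
  have hB : (0 : ℝ) < Fintype.card B := by exact_mod_cast Fintype.card_pos
  have hrate : G.mart w / Fintype.card A ^ w.length ≤ H.mart v / Fintype.card B ^ v.length := by
    rwa [div_le_div_iff₀ (by positivity) (by positivity)]
  rw [G.sgale_eq_rpow_mul_mart_div, H.sgale_eq_rpow_mul_mart_div, mul_left_comm]
  gcongr

theorem sgale_le_sgale_of_mart_le {B : Type} [Fintype B] [Nonempty A] [Nonempty B]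
    (H : FSG B) {w : List A} {v : List B} {s t : ℝ}
    (hmart : G.mart w * Fintype.card B ^ v.length ≤ H.mart v * Fintype.card A ^ w.length)
    (hst : (Fintype.card B : ℝ) ^ (t * v.length) = Fintype.card A ^ (s * w.length)) :
    G.sgale s w ≤ H.sgale t v := by
  have h := G.mul_sgale_le_mul_sgale_of_mart_le H (s := s) (t := t) hmart
  rw [hst] at h
  exact le_of_mul_le_mul_left h (Real.rpow_pos_of_pos (by exact_mod_cast Fintype.card_pos) _)

def uniform [Nonempty A] : FSG A where
  Q := Unit
  fin := inferInstance
  q0 := ()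
  δ _ _ := ()
  β _ _ := (Fintype.card A : ℚ)⁻¹
  β_nonneg _ _ := by positivity
  β_sum _ := by simp

theorem mart_uniform [Nonempty A] (w : List A) : uniform.mart w = 1 := by
  simp [mart, uniform]

end FSG

theorem dimFS_eq_zero_of_forall_pos {S : ℕ → A} (h : ∀ s > 0, ∃ G : FSG A, G.succeeds s S) :
    dimFS S = 0 := by
  refine le_antisymm ?_ (Real.sInf_nonneg fun s hs => hs.1)
  rw [← csInf_Ioi (a := (0 : ℝ))]
  exact csInf_le_csInf ⟨0, fun s hs => hs.1⟩ Set.nonempty_Ioi fun s hs => ⟨hs.le, h s hs⟩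

open scoped Pointwise in
theorem dimFS_eq_mul_dimFS_of_succeeds_iff {B : Type} [Fintype B] {S : ℕ → A} {T : ℕ → B}
    {c : ℝ} (hc : 0 < c)
    (h : ∀ t ≥ 0, (∃ G : FSG A, G.succeeds (c * t) S) ↔ ∃ H : FSG B, H.succeeds t T) :
    dimFS S = c * dimFS T := by
  have hset : {s : ℝ | 0 ≤ s ∧ ∃ G : FSG A, G.succeeds s S}
      = c • {t : ℝ | 0 ≤ t ∧ ∃ H : FSG B, H.succeeds t T} := by
    ext s
    rw [Set.mem_smul_set]
    constructor
    · rintro ⟨hs, hG⟩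
      have hsc : 0 ≤ s / c := div_nonneg hs hc.le
      refine ⟨s / c, ⟨hsc, (h _ hsc).1 ?_⟩, mul_div_cancel₀ s hc.ne'⟩
      rwa [mul_div_cancel₀ s hc.ne']
    · rintro ⟨t, ⟨ht, hH⟩, rfl⟩
      exact ⟨mul_nonneg hc.le ht, (h t ht).2 hH⟩
  rw [dimFS, hset, Real.sInf_smul_of_nonneg hc.le, smul_eq_mul, dimFS]

section Blocks

variable {Γ : Type} {l : ℕ} {A : Finset (Fin l → Γ)}

def concatBlocks (v : List A) : List Γ := v.flatMap fun a => List.ofFn (a : Fin l → Γ)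

theorem concatBlocks_nil : concatBlocks ([] : List A) = [] := rfl

theorem concatBlocks_append_singleton (v : List A) (a : A) :
    concatBlocks (v ++ [a]) = concatBlocks v ++ List.ofFn (a : Fin l → Γ) := by
  simp [concatBlocks]

theorem length_concatBlocks (v : List A) : (concatBlocks v).length = l * v.length := by
  induction v using List.reverseRecOn with
  | nil => rfl
  | append_singleton v a ih => simp [concatBlocks_append_singleton, ih, mul_add]

theorem pre_mul_eq_concatBlocks {S : ℕ → Γ} {T : ℕ → A}
    (hT : ∀ k, (T k : Fin l → Γ) = fun i : Fin l => S (k * l + i)) (k : ℕ) :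
    pre S (k * l) = concatBlocks (pre T k) := by
  induction k with
  | zero => simp [pre_zero, concatBlocks_nil]
  | succ k ih => rw [pre_succ, concatBlocks_append_singleton, ← ih, hT, add_mul, one_mul, pre_add]

variable [Fintype Γ]

theorem rpow_length_eq_rpow_length_concatBlocks {s t : ℝ}
    (hst : (A.card : ℝ) ^ t = Fintype.card Γ ^ (s * l)) (v : List A) :
    (Fintype.card A : ℝ) ^ (t * v.length) = Fintype.card Γ ^ (s * (concatBlocks v).length) := by
  rw [Fintype.card_coe, length_concatBlocks, Nat.cast_mul, ← mul_assoc,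
    Real.rpow_mul_natCast (Nat.cast_nonneg _) t,
    Real.rpow_mul_natCast (Nat.cast_nonneg _) (s * l), hst]

namespace FSG

variable (A) in
def blockMass (G : FSG Γ) (q : G.Q) : ℚ := ∑ a : A, G.prob q (List.ofFn (a : Fin l → Γ))

theorem blockMass_le_one (G : FSG Γ) (q : G.Q) : G.blockMass A q ≤ 1 := by
  calc G.blockMass A q = ∑ v ∈ A, G.prob q (List.ofFn v) :=
        Finset.sum_coe_sort A fun v => G.prob q (List.ofFn v)
    _ ≤ ∑ v : Fin l → Γ, G.prob q (List.ofFn v) :=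
        Finset.sum_le_sum_of_subset_of_nonneg (Finset.subset_univ A)
          fun v _ _ => G.prob_nonneg q _
    _ = 1 := G.sum_prob_ofFn q l

variable (A) in
/-- The mass that `G` puts on blocks outside `A` is spread uniformly over `A`; all that matters is
that the bet on a block is at least its probability under `G`. -/
def toBlocks [Nonempty A] (G : FSG Γ) : FSG A where
  Q := G.Q
  fin := G.fin
  q0 := G.q0
  δ q a := (List.ofFn (a : Fin l → Γ)).foldl G.δ q
  β q a := G.prob q (List.ofFn (a : Fin l → Γ)) + (1 - G.blockMass A q) / Fintype.card A
  β_nonneg q a := add_nonneg (G.prob_nonneg q _)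
    (div_nonneg (sub_nonneg.2 (G.blockMass_le_one q)) (Nat.cast_nonneg _))
  β_sum q := by
    rw [Finset.sum_add_distrib, ← blockMass, Finset.sum_const, Finset.card_univ, nsmul_eq_mul,
      mul_div_cancel₀ _ (by exact_mod_cast Fintype.card_ne_zero), add_sub_cancel]

variable [Nonempty A] (G : FSG Γ)

theorem prob_le_toBlocks_β (q : G.Q) (a : A) :
    G.prob q (List.ofFn (a : Fin l → Γ)) ≤ (G.toBlocks A).β q a :=
  le_add_of_nonneg_right (div_nonneg (sub_nonneg.2 (G.blockMass_le_one q)) (Nat.cast_nonneg _))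

theorem toBlocks_run (v : List A) : (G.toBlocks A).run v = G.run (concatBlocks v) := by
  induction v using List.reverseRecOn with
  | nil => rfl
  | append_singleton v a ih =>
    rw [run_append_singleton, concatBlocks_append_singleton, run_append, ← ih]
    rfl

theorem mart_concatBlocks_le_toBlocks_mart (v : List A) :
    G.mart (concatBlocks v) * Fintype.card A ^ v.length
      ≤ (G.toBlocks A).mart v * Fintype.card Γ ^ (concatBlocks v).length := by
  induction v using List.reverseRecOn with
  | nil => simp [concatBlocks_nil, mart_nil]
  | append_singleton v a ih =>
    have hpb : (G.prob (G.run (concatBlocks v)) (List.ofFn (a : Fin l → Γ)) : ℝ)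
        ≤ (G.toBlocks A).β ((G.toBlocks A).run v) a := by
      rw [toBlocks_run]
      exact_mod_cast G.prob_le_toBlocks_β _ a
    set p := G.prob (G.run (concatBlocks v)) (List.ofFn (a : Fin l → Γ))
    set b := (G.toBlocks A).β ((G.toBlocks A).run v) a
    have hp : (0 : ℝ) ≤ p := by exact_mod_cast G.prob_nonneg _ _
    rw [concatBlocks_append_singleton, mart_append, mart_append_singleton]
    simp only [List.length_append, List.length_singleton, List.length_ofFn, pow_add, pow_one]
    calc G.mart (concatBlocks v) * (p * Fintype.card Γ ^ l)
          * (Fintype.card A ^ v.length * Fintype.card A)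
        = (G.mart (concatBlocks v) * Fintype.card A ^ v.length)
          * (p * Fintype.card A) * Fintype.card Γ ^ l := by ring
      _ ≤ ((G.toBlocks A).mart v * Fintype.card Γ ^ (concatBlocks v).length)
          * (b * Fintype.card A) * Fintype.card Γ ^ l := by
        have := (G.toBlocks A).mart_nonneg v
        gcongr
      _ = _ := by ring

theorem succeeds_toBlocks (hl : 0 < l) {S : ℕ → Γ} {T : ℕ → A}
    (hT : ∀ k, (T k : Fin l → Γ) = fun i : Fin l => S (k * l + i)) {s t : ℝ} (hs : 0 ≤ s)
    (hst : (A.card : ℝ) ^ t = Fintype.card Γ ^ (s * l)) (hG : G.succeeds s S) :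
    (G.toBlocks A).succeeds t T := by
  have : Nonempty Γ := ⟨S 0⟩
  intro C
  obtain ⟨k, hk⟩ := G.exists_lt_sgale_pre_mul hG hs hl C
  refine ⟨k, hk.trans_le ?_⟩
  rw [pre_mul_eq_concatBlocks hT]
  exact G.sgale_le_sgale_of_mart_le _ (G.mart_concatBlocks_le_toBlocks_mart _)
    (rpow_length_eq_rpow_length_concatBlocks hst _)

end FSG

end Blocks

section Letters

variable {Γ : Type} [DecidableEq Γ] {l : ℕ} {A : Finset (Fin l → Γ)}

namespace FSG

def prefixMass (G : FSG A) (q : G.Q) (u : List Γ) : ℚ :=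
  ∑ a : A, if u <+: List.ofFn (a : Fin l → Γ) then G.β q a else 0

variable (G : FSG A)

theorem prefixMass_nonneg (q : G.Q) (u : List Γ) : 0 ≤ G.prefixMass q u :=
  Finset.sum_nonneg fun a _ => by split_ifs <;> simp [G.β_nonneg]

theorem prefixMass_nil (q : G.Q) : G.prefixMass q [] = 1 := by
  simp only [prefixMass, List.nil_prefix, if_true]
  exact G.β_sum q

theorem prefixMass_ofFn (q : G.Q) (a : A) :
    G.prefixMass q (List.ofFn (a : Fin l → Γ)) = G.β q a := by
  have key (a' : A) : List.ofFn (a : Fin l → Γ) <+: List.ofFn (a' : Fin l → Γ) ↔ a' = a :=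
    ⟨fun h => Subtype.ext (List.ofFn_injective (h.eq_of_length (by simp))).symm,
      fun h => h ▸ List.prefix_refl _⟩
  simp [prefixMass, key]

variable [Fintype Γ]

theorem prefixMass_eq_sum (q : G.Q) {u : List Γ} (hu : u.length < l) :
    G.prefixMass q u = ∑ b : Γ, G.prefixMass q (u ++ [b]) := by
  simp only [prefixMass]
  rw [Finset.sum_comm]
  exact Finset.sum_congr rfl fun a _ =>
    ite_prefix_eq_sum_ite_append_singleton_prefix (by simpa using hu) _

theorem prefixMass_append_singleton_le (q : G.Q) {u : List Γ} (hu : u.length < l) (b : Γ) :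
    G.prefixMass q (u ++ [b]) ≤ G.prefixMass q u :=
  G.prefixMass_eq_sum q hu ▸
    Finset.single_le_sum (fun _ _ => G.prefixMass_nonneg q _) (Finset.mem_univ b)

variable [Nonempty Γ] (hl : 0 < l)

/-- A state pairs a state of `G` with the unfinished current block. A completed block outside `A`,
which never occurs along a sequence of blocks of `A`, just resets the block. Reducible, so that
`(G.toLetters hl).Q` unfolds to this product in the statements below. -/
abbrev toLetters : FSG Γ where
  Q := G.Q × {u : List Γ // u.length < l}
  fin :=
    have := G.fin
    have : Finite {u : List Γ // u.length < l} := (List.finite_length_lt Γ l).to_subtype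
    inferInstance
  q0 := (G.q0, ⟨[], hl⟩)
  δ p b :=
    if h : p.2.1.length + 1 < l then (p.1, ⟨p.2.1 ++ [b], by simpa using h⟩)
    else if ha : (fun i : Fin l => (p.2.1 ++ [b]).getD i b) ∈ A then (G.δ p.1 ⟨_, ha⟩, ⟨[], hl⟩)
    else (p.1, ⟨[], hl⟩)
  β p b := if G.prefixMass p.1 p.2.1 = 0 then (Fintype.card Γ : ℚ)⁻¹
    else G.prefixMass p.1 (p.2.1 ++ [b]) / G.prefixMass p.1 p.2.1
  β_nonneg p b := by
    split_ifs
    · positivity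
    · exact div_nonneg (G.prefixMass_nonneg _ _) (G.prefixMass_nonneg _ _)
  β_sum p := by
    split_ifs with h
    · simp
    · rw [← Finset.sum_div, ← G.prefixMass_eq_sum _ p.2.2, div_self h]

theorem prefixMass_append_singleton_le_toLetters_β (q : G.Q) (u : List Γ) (hu : u.length < l)
    (b : Γ) :
    G.prefixMass q (u ++ [b]) ≤ (G.toLetters hl).β (q, ⟨u, hu⟩) b * G.prefixMass q u := by
  change _ ≤ (if G.prefixMass q u = 0 then _ else _) * _
  split_ifs with h
  · simpa [h] using G.prefixMass_append_singleton_le q hu b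
  · rw [div_mul_cancel₀ _ h]

theorem foldl_toLetters_of_length_lt (q : G.Q) (u : List Γ) (hu : u.length < l) :
    u.foldl (G.toLetters hl).δ (q, ⟨[], hl⟩) = (q, ⟨u, hu⟩) := by
  induction u using List.reverseRecOn with
  | nil => rfl
  | append_singleton u b ih =>
    have hu' : u.length + 1 < l := by simpa using hu
    rw [List.foldl_append, ih (by omega)]
    simp [toLetters, hu']

theorem toLetters_δ_of_append_singleton_eq_ofFn (q : G.Q) {u : List Γ} (hu : u.length < l)
    {b : Γ} {a : A} (h : u ++ [b] = List.ofFn (a : Fin l → Γ)) :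
    (G.toLetters hl).δ (q, ⟨u, hu⟩) b = (G.δ q a, ⟨[], hl⟩) := by
  have hlen : ¬ u.length + 1 < l := by simpa using (congrArg List.length h).ge
  have hblock : (fun i : Fin l => (u ++ [b]).getD i b) = a := by
    ext i
    rw [h, List.getD_eq_getElem _ _ (by simp), List.getElem_ofFn]
  show (if h : u.length + 1 < l then _ else _) = _
  rw [dif_neg hlen, dif_pos (hblock ▸ a.2)]
  simp only [hblock]

theorem foldl_toLetters_ofFn (q : G.Q) (a : A) :
    (List.ofFn (a : Fin l → Γ)).foldl (G.toLetters hl).δ (q, ⟨[], hl⟩) = (G.δ q a, ⟨[], hl⟩) := by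
  have hne : List.ofFn (a : Fin l → Γ) ≠ [] := by simp [hl.ne']
  have hsplit := List.dropLast_append_getLast hne
  rw [← hsplit, List.foldl_append, G.foldl_toLetters_of_length_lt hl q _ (by simp [hl]),
    List.foldl_cons, List.foldl_nil, G.toLetters_δ_of_append_singleton_eq_ofFn hl q _ hsplit]

theorem toLetters_run_concatBlocks (v : List A) :
    (G.toLetters hl).run (concatBlocks v) = (G.run v, ⟨[], hl⟩) := by
  induction v using List.reverseRecOn with
  | nil => rfl
  | append_singleton v a ih =>
    rw [concatBlocks_append_singleton, run_append, ih, foldl_toLetters_ofFn, run_append_singleton]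

theorem mul_prefixMass_le_toLetters_mart_append {w : List Γ} {q : G.Q}
    (hw : (G.toLetters hl).run w = (q, ⟨[], hl⟩)) (u : List Γ) (hu : u.length ≤ l) :
    (G.toLetters hl).mart w * Fintype.card Γ ^ u.length * G.prefixMass q u
      ≤ (G.toLetters hl).mart (w ++ u) := by
  induction u using List.reverseRecOn with
  | nil => simp [prefixMass_nil]
  | append_singleton u b ih =>
    have hu' : u.length < l := by simpa using hu
    set β' := (G.toLetters hl).β (q, ⟨u, hu'⟩) b
    have hrun : (G.toLetters hl).run (w ++ u) = (q, ⟨u, hu'⟩) := by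
      rw [run_append, hw, foldl_toLetters_of_length_lt]
    have hβ' : (G.prefixMass q (u ++ [b]) : ℝ) ≤ β' * G.prefixMass q u := by
      exact_mod_cast G.prefixMass_append_singleton_le_toLetters_β hl q u hu' b
    have hβ'_nonneg : (0 : ℝ) ≤ β' := by exact_mod_cast (G.toLetters hl).β_nonneg _ b
    have hmart := (G.toLetters hl).mart_nonneg w
    rw [← List.append_assoc, mart_append_singleton, hrun, List.length_append,
      List.length_singleton, pow_succ]
    calc (G.toLetters hl).mart w * (Fintype.card Γ ^ u.length * Fintype.card Γ)
          * G.prefixMass q (u ++ [b])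
        ≤ (G.toLetters hl).mart w * (Fintype.card Γ ^ u.length * Fintype.card Γ)
          * (β' * G.prefixMass q u) := by gcongr
      _ = ((G.toLetters hl).mart w * Fintype.card Γ ^ u.length * G.prefixMass q u)
          * (β' * Fintype.card Γ) := by ring
      _ ≤ (G.toLetters hl).mart (w ++ u) * (β' * Fintype.card Γ) := by
          gcongr
          exact ih hu'.le

theorem mart_le_toLetters_mart_concatBlocks (v : List A) :
    G.mart v * Fintype.card Γ ^ (concatBlocks v).length
      ≤ (G.toLetters hl).mart (concatBlocks v) * Fintype.card A ^ v.length := by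
  induction v using List.reverseRecOn with
  | nil => simp [concatBlocks_nil, mart_nil]
  | append_singleton v a ih =>
    set b := G.β (G.run v) a
    have hblock := G.mul_prefixMass_le_toLetters_mart_append hl (G.toLetters_run_concatBlocks hl v)
      (List.ofFn (a : Fin l → Γ)) (by simp)
    rw [prefixMass_ofFn, List.length_ofFn] at hblock
    have hb : (0 : ℝ) ≤ b := by exact_mod_cast G.β_nonneg _ a
    rw [mart_append_singleton, concatBlocks_append_singleton, List.length_append,
      List.length_ofFn, List.length_append, List.length_singleton, pow_add, pow_succ]
    calc G.mart v * (b * Fintype.card A)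
          * (Fintype.card Γ ^ (concatBlocks v).length * Fintype.card Γ ^ l)
        = (G.mart v * Fintype.card Γ ^ (concatBlocks v).length)
          * (b * Fintype.card A * Fintype.card Γ ^ l) := by ring
      _ ≤ ((G.toLetters hl).mart (concatBlocks v) * Fintype.card A ^ v.length)
          * (b * Fintype.card A * Fintype.card Γ ^ l) := by gcongr
      _ = ((G.toLetters hl).mart (concatBlocks v) * Fintype.card Γ ^ l * b)
          * (Fintype.card A ^ v.length * Fintype.card A) := by ring
      _ ≤ (G.toLetters hl).mart (concatBlocks v ++ List.ofFn (a : Fin l → Γ))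
          * (Fintype.card A ^ v.length * Fintype.card A) := by gcongr

theorem succeeds_toLetters {S : ℕ → Γ} {T : ℕ → A}
    (hT : ∀ k, (T k : Fin l → Γ) = fun i : Fin l => S (k * l + i)) {s t : ℝ}
    (hst : (A.card : ℝ) ^ t = Fintype.card Γ ^ (s * l)) (hG : G.succeeds t T) :
    (G.toLetters hl).succeeds s S := by
  have : Nonempty A := ⟨T 0⟩
  intro C
  obtain ⟨k, hk⟩ := hG C
  refine ⟨k * l, hk.trans_le ?_⟩
  rw [pre_mul_eq_concatBlocks hT]
  exact G.sgale_le_sgale_of_mart_le _ (G.mart_le_toLetters_mart_concatBlocks hl _)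
    (rpow_length_eq_rpow_length_concatBlocks hst _).symm

end FSG

variable [Fintype Γ]

theorem succeeds_uniform_toLetters [Nontrivial Γ] [Nonempty A] (hl : 0 < l) (hA : A.card = 1)
    {S : ℕ → Γ} {T : ℕ → A} (hT : ∀ k, (T k : Fin l → Γ) = fun i : Fin l => S (k * l + i))
    {s : ℝ} (hs : 0 < s) : ((FSG.uniform : FSG A).toLetters hl).succeeds s S := by
  intro C
  have hΓ : (1 : ℝ) < Fintype.card Γ := by exact_mod_cast Fintype.one_lt_card
  obtain ⟨k, hk⟩ := pow_unbounded_of_one_lt C (Real.one_lt_rpow hΓ (by positivity : 0 < s * l))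
  refine ⟨k * l, hk.trans_le ?_⟩
  have h := (FSG.uniform : FSG A).mul_sgale_le_mul_sgale_of_mart_le (s := 1) (t := s) _
    ((FSG.uniform : FSG A).mart_le_toLetters_mart_concatBlocks hl (pre T k))
  rw [← pre_mul_eq_concatBlocks hT] at h
  have hpow : ((Fintype.card Γ : ℝ) ^ (s * l)) ^ k = Fintype.card Γ ^ (s * (k * l : ℕ)) := by
    rw [← Real.rpow_mul_natCast (Nat.cast_nonneg _)]
    push_cast
    ring_nf
  rw [hpow]
  simpa [hA, FSG.sgale, FSG.mart_uniform, length_pre, ← Real.rpow_mul_natCast, mul_assoc] using h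

theorem dimFS_eq_zero_of_card_eq_one [Nontrivial Γ] (hl : 0 < l) (hA : A.card = 1) {S : ℕ → Γ}
    {T : ℕ → A} (hT : ∀ k, (T k : Fin l → Γ) = fun i : Fin l => S (k * l + i)) :
    dimFS S = 0 :=
  have : Nonempty A := ⟨T 0⟩
  dimFS_eq_zero_of_forall_pos fun _ hs => ⟨_, succeeds_uniform_toLetters hl hA hT hs⟩

theorem dimFS_eq_logb_card_div_mul_dimFS [Nontrivial Γ] (hl : 0 < l) (hA : 1 < A.card)
    {S : ℕ → Γ} {T : ℕ → A} (hT : ∀ k, (T k : Fin l → Γ) = fun i : Fin l => S (k * l + i)) :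
    dimFS S = Real.logb (Fintype.card Γ) A.card / l * dimFS T := by
  have : Nonempty A := ⟨T 0⟩
  have hΓ : (1 : ℝ) < Fintype.card Γ := by exact_mod_cast Fintype.one_lt_card
  have hl' : (l : ℝ) ≠ 0 := by exact_mod_cast hl.ne'
  have hc : 0 < Real.logb (Fintype.card Γ) A.card / l :=
    div_pos (Real.logb_pos hΓ (by exact_mod_cast hA)) (by positivity)
  have hst (t : ℝ) :
      (A.card : ℝ) ^ t = Fintype.card Γ ^ (Real.logb (Fintype.card Γ) A.card / l * t * l) := by
    rw [div_mul_eq_mul_div, div_mul_cancel₀ _ hl', Real.rpow_mul (by positivity),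
      Real.rpow_logb (by positivity) hΓ.ne' (by positivity)]
  refine dimFS_eq_mul_dimFS_of_succeeds_iff hc fun t ht => ⟨?_, ?_⟩
  · rintro ⟨G, hG⟩
    exact ⟨G.toBlocks A, G.succeeds_toBlocks hl hT (by positivity) (hst t) hG⟩
  · rintro ⟨H, hH⟩
    exact ⟨H.toLetters hl, H.succeeds_toLetters hl hT (hst t) hH⟩

end Letters

theorem dimFS_block_alphabet_general (l : ℕ) (hl : 0 < l)
    (A : Finset (Fin l → Bool))
    (S : ℕ → Bool)
    (T : ℕ → {v : Fin l → Bool // v ∈ A})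
    (hT : ∀ k : ℕ, (T k : Fin l → Bool) = fun i : Fin l => S (k * l + i)) :
    dimFS S = Real.logb 2 (A.card : ℝ) / (l : ℝ) * dimFS T := by
  have hA : 1 ≤ A.card := Finset.card_pos.2 ⟨T 0, (T 0).2⟩
  obtain hA | hA := hA.eq_or_lt
  · rw [← hA, Nat.cast_one, Real.logb_one, zero_div, zero_mul]
    exact dimFS_eq_zero_of_card_eq_one hl hA.symm hT
  · simpa using dimFS_eq_logb_card_div_mul_dimFS hl hA hT

theorem dimFS_block_alphabet (l : ℕ) (hl : 0 < l)
    (A : Finset (Fin l → Bool)) (hA : A.Nonempty)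
    (S : ℕ → Bool)
    (hblocks : ∀ k : ℕ, (fun i : Fin l => S (k * l + i)) ∈ A)
    (T : ℕ → {v : Fin l → Bool // v ∈ A})
    (hT : ∀ k : ℕ, (T k : Fin l → Bool) = fun i : Fin l => S (k * l + i)) :
    dimFS S = Real.logb 2 (A.card : ℝ) / (l : ℝ) * dimFS T :=
  dimFS_block_alphabet_general l hl A S T hT
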